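/- Let x∈ℂ be fixed. Then as q tends to 1 from below, e_{-1/2}((1-q)x;q²) tends to e^x, where e_{-1/2}(y;q²) = cos_{-1/2}(-iy;q²) + i·sin_{-1/2}(-iy;q²). -/

import Mathlib

noncomputable section

open Complex Filter Topology

/-- Finite q-Pochhammer symbol (a;q)ₖ over ℂ. -/
def qPoch (a q : ℂ) (k : ℕ) : ℂ := ∏ j ∈ Finset.range k, (1 - a * q ^ j)

/-- Finite q-Pochhammer symbol (a;q)ₖ over ℝ. -/
def qPochR (a q : ℝ) (k : ℕ) : ℝ := ∏ j ∈ Finset.range k, (1 - a * q ^ j)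

/-- Infinite q-Pochhammer symbol (a;q)_∞ over ℝ. -/
def qPochInf (a q : ℝ) : ℝ := ∏' k : ℕ, (1 - a * q ^ k)

/-- k-th term of the generalized q²-cosine series cos_α(x;q²). -/
def qCosTerm (q α : ℝ) (x : ℂ) (k : ℕ) : ℂ :=
  (-1) ^ k * (q : ℂ) ^ (k * (k + 1)) * x ^ (2 * k) /
    (qPoch ((q ^ (2 * α + 2 : ℝ) : ℝ) : ℂ) ((q : ℂ) ^ 2) k *
      qPoch ((q : ℂ) ^ 2) ((q : ℂ) ^ 2) k)

/-- Generalized q²-cosine cos_α(x;q²). -/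
def qCos (q α : ℝ) (x : ℂ) : ℂ := ∑' k : ℕ, qCosTerm q α x k

/-- k-th term of the generalized q²-sine series sin_α(x;q²). -/
def qSinTerm (q α : ℝ) (x : ℂ) (k : ℕ) : ℂ :=
  (-1) ^ k * (q : ℂ) ^ (k * (k + 1)) * x ^ (2 * k + 1) /
    (qPoch ((q ^ (2 * α + 2 : ℝ) : ℝ) : ℂ) ((q : ℂ) ^ 2) (k + 1) *
      qPoch ((q : ℂ) ^ 2) ((q : ℂ) ^ 2) k)

/-- Generalized q²-sine sin_α(x;q²). -/
def qSin (q α : ℝ) (x : ℂ) : ℂ := ∑' k : ℕ, qSinTerm q α x k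

/-- Generalized q²-exponential e_α(x;q²) = cos_α(-ix;q²) + i·sin_α(-ix;q²). -/
def qExp (q α : ℝ) (x : ℂ) : ℂ :=
  qCos q α (-Complex.I * x) + Complex.I * qSin q α (-Complex.I * x)

/-- The constant C_{α,q} = (1-q)^α (q^{2α+2};q²)_∞ / (2 (q²;q²)_∞). -/
def Cconst (q α : ℝ) : ℝ :=
  (1 - q) ^ α * qPochInf (q ^ (2 * α + 2 : ℝ)) (q ^ 2) / (2 * qPochInf (q ^ 2) (q ^ 2))

/-- Bilateral q-Jackson integral ∫_{-∞}^∞ F(x) d_q x, for a ℂ-valued integrand. -/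
def jacksonBi (q : ℝ) (F : ℝ → ℂ) : ℂ :=
  ((1 - q : ℝ) : ℂ) * ∑' n : ℤ, (q : ℂ) ^ n * (F (q ^ n) + F (-(q ^ n)))

/-- Bilateral q-Jackson integral ∫_{-∞}^∞ F(x) d_q x, for an ℝ-valued integrand. -/
def jacksonBiR (q : ℝ) (F : ℝ → ℝ) : ℝ :=
  (1 - q) * ∑' n : ℤ, q ^ n * (F (q ^ n) + F (-(q ^ n)))

/-- Generalized q²-Fourier transform f̂(x;q²). -/
def qFourier (q α : ℝ) (f : ℝ → ℂ) (x : ℝ) : ℂ :=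
  (Cconst q α : ℂ) * jacksonBi q (fun t =>
    f t * qExp q α (-Complex.I * (((1 - q) * t * x : ℝ) : ℂ)) * ((|t| ^ (2 * α + 1) : ℝ) : ℂ))

/-- Generalized q-differential operator ∂_{q,α} (for x ≠ 0). -/
def qDeriv (q α : ℝ) (f : ℝ → ℂ) (x : ℝ) : ℂ :=
  (f (q⁻¹ * x) + f (-(q⁻¹ * x)) - ((q ^ (2 * α + 1 : ℝ) : ℝ) : ℂ) * (f x + f (-x))) /
      (2 * ((1 - q : ℝ) : ℂ) * (x : ℂ)) +
    (f x - f (-x) - ((q ^ (2 * α + 1 : ℝ) : ℝ) : ℂ) * (f (q * x) - f (-(q * x)))) /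
      (2 * ((1 - q : ℝ) : ℂ) * (x : ℂ))

/-- q-number [x]_q = (1 - q^x)/(1 - q). -/
def qBracket (q x : ℝ) : ℝ := (1 - q ^ x) / (1 - q)

/-- Generalized q-factorial [m]_{q,α}! = ∏_{j=1}^m [j]_{q,α}, where
[2n]_{q,α} = [2n+2α+1]_q and [2n+1]_{q,α} = [2n+2α+2]_q (both equal [j+2α+1]_q for j = 2n
resp. j = 2n+1). -/
def qFactG (q α : ℝ) (m : ℕ) : ℝ :=
  ∏ j ∈ Finset.range m, qBracket q ((j : ℝ) + 1 + 2 * α + 1)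

/-- Generalized q-shifted factorial (q;q)_{m,α} = (1-q)^m [m]_{q,α}!. -/
def qShiftG (q α : ℝ) (m : ℕ) : ℝ := (1 - q) ^ m * qFactG q α m

/-- q-Gamma function Γ_q(z) = ((q;q)_∞/(q^z;q)_∞)(1-q)^{1-z}. -/
def qGammaF (q z : ℝ) : ℝ := qPochInf q q / qPochInf (q ^ z) q * (1 - q) ^ (1 - z)

/-!
For `α = -1/2` one has `q^(2α+2) = q`, so the Pochhammer products in the `k`-th terms of
`cos_{-1/2}` and `sin_{-1/2}` merge into `(q;q)_{2k}` and `(q;q)_{2k+1}`, and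
`e_{-1/2}((1-q)x;q²) = ∑ₙ q^(⌊n/2⌋(⌊n/2⌋+1)) xⁿ / [n]_q!`. By AM-GM, `[m+1]_q ≥ (m+1) q^(m/2)`,
so `[n]_q! ≥ n! q^(n(n-1)/4)`, and `n(n-1)/4 ≤ ⌊n/2⌋(⌊n/2⌋+1)`. Hence the `n`-th term is bounded by
`|x|ⁿ/n!` uniformly in `q ∈ (0,1)`, and dominated convergence gives the limit `∑ xⁿ/n! = eˣ`.
-/

open Finset
open scoped Nat

/-- The `q`-factorial `[n]_q! = ∏_{m=1}^{n} (1 + q + ⋯ + q^(m-1))`. -/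
def qFactorial {R : Type*} [CommSemiring R] (q : R) (n : ℕ) : R :=
  ∏ m ∈ range n, ∑ i ∈ range (m + 1), q ^ i

lemma qFactorial_one {R : Type*} [CommSemiring R] (n : ℕ) : qFactorial (1 : R) n = n ! := by
  simp [qFactorial, ← prod_range_add_one_eq_factorial]

lemma ofReal_qFactorial (q : ℝ) (n : ℕ) : ((qFactorial q n : ℝ) : ℂ) = qFactorial (q : ℂ) n := by
  simp [qFactorial]

lemma qFactorial_pos {q : ℝ} (hq : 0 ≤ q) (n : ℕ) : 0 < qFactorial q n :=
  prod_pos fun _ _ => sum_pos' (fun i _ => pow_nonneg hq i) ⟨0, by simp, by simp⟩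

lemma continuous_qFactorial (n : ℕ) : Continuous fun q : ℝ => qFactorial q n := by
  unfold qFactorial
  fun_prop

lemma qPoch_succ (a q : ℂ) (k : ℕ) : qPoch a q (k + 1) = qPoch a q k * (1 - a * q ^ k) :=
  prod_range_succ _ _

lemma qPoch_self (q : ℂ) (n : ℕ) : qPoch q q n = (1 - q) ^ n * qFactorial q n := by
  rw [qPoch, qFactorial, ← card_range n, ← prod_const, card_range, ← prod_mul_distrib]
  exact prod_congr rfl fun j _ => by rw [mul_neg_geom_sum, pow_succ']

lemma qPoch_mul_qPoch_sq (q : ℂ) (k : ℕ) :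
    qPoch q (q ^ 2) k * qPoch (q ^ 2) (q ^ 2) k = qPoch q q (2 * k) := by
  induction k with
  | zero => simp [qPoch]
  | succ k ih =>
    rw [show 2 * (k + 1) = 2 * k + 1 + 1 by ring, qPoch_succ, qPoch_succ, qPoch_succ, qPoch_succ,
      ← ih]
    ring

lemma qPoch_succ_mul_qPoch_sq (q : ℂ) (k : ℕ) :
    qPoch q (q ^ 2) (k + 1) * qPoch (q ^ 2) (q ^ 2) k = qPoch q q (2 * k + 1) := by
  rw [qPoch_succ, qPoch_succ, ← qPoch_mul_qPoch_sq]
  ring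

lemma add_one_mul_pow_le_sum_sq_pow (r : ℝ) (m : ℕ) :
    (m + 1) * r ^ m ≤ ∑ i ∈ range (m + 1), (r ^ 2) ^ i := by
  -- AM-GM on `r^i` and `r^(m-i)`, summed over `i`.
  have hamgm : ∀ i ∈ range (m + 1), 2 * r ^ m ≤ (r ^ 2) ^ i + (r ^ 2) ^ (m - i) := by
    intro i hi
    have hi : i + (m - i) = m := by have := mem_range.mp hi; omega
    simpa only [mul_assoc, ← pow_add, hi, ← pow_mul, mul_comm 2] using
      two_mul_le_add_sq (r ^ i) (r ^ (m - i))
  have hsum := sum_le_sum hamgm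
  have hrefl := sum_range_reflect (fun i => (r ^ 2) ^ i) (m + 1)
  simp only [Nat.add_sub_cancel] at hrefl
  rw [sum_add_distrib, hrefl] at hsum
  simp only [sum_const, card_range, nsmul_eq_mul] at hsum
  push_cast at hsum
  linarith

lemma factorial_mul_pow_le_qFactorial_sq {r : ℝ} (hr : 0 ≤ r) (n : ℕ) :
    n ! * r ^ (∑ m ∈ range n, m) ≤ qFactorial (r ^ 2) n := by
  rw [qFactorial, ← prod_pow_eq_pow_sum, ← prod_range_add_one_eq_factorial, Nat.cast_prod,
    ← prod_mul_distrib]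
  exact prod_le_prod (fun m _ => by positivity) fun m _ => by
    exact_mod_cast add_one_mul_pow_le_sum_sq_pow r m

lemma sum_range_id_le_two_mul_div_two_mul_succ (n : ℕ) :
    ∑ m ∈ range n, m ≤ 2 * (n / 2 * (n / 2 + 1)) := by
  have hn : (∑ m ∈ range n, m) * 2 ≤ (2 * (n / 2) + 1) * (2 * (n / 2)) :=
    sum_range_id_mul_two n ▸ Nat.mul_le_mul (by omega) (by omega)
  generalize ∑ m ∈ range n, m = s at hn ⊢
  generalize n / 2 = h at hn ⊢
  nlinarith

/-- The coefficient of `xⁿ` in `e_{-1/2}((1-q)x;q²)` (`n / 2` is floor division). -/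
def qExpCoeff (q : ℝ) (n : ℕ) : ℝ := q ^ (n / 2 * (n / 2 + 1)) / qFactorial q n

lemma qExpCoeff_nonneg {q : ℝ} (hq : 0 ≤ q) (n : ℕ) : 0 ≤ qExpCoeff q n :=
  div_nonneg (pow_nonneg hq _) (qFactorial_pos hq n).le

lemma qExpCoeff_le_inv_factorial {q : ℝ} (hq0 : 0 ≤ q) (hq1 : q ≤ 1) (n : ℕ) :
    qExpCoeff q n ≤ (n ! : ℝ)⁻¹ := by
  obtain ⟨r, hr0, rfl⟩ : ∃ r, 0 ≤ r ∧ r ^ 2 = q := ⟨√q, Real.sqrt_nonneg q, Real.sq_sqrt hq0⟩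
  have hr1 : r ≤ 1 := (sq_le_one_iff₀ hr0).mp hq1
  rw [qExpCoeff, div_le_iff₀ (qFactorial_pos (sq_nonneg r) n), inv_mul_eq_div,
    le_div_iff₀' (by positivity), ← pow_mul]
  calc (n ! : ℝ) * r ^ (2 * (n / 2 * (n / 2 + 1)))
      ≤ n ! * r ^ (∑ m ∈ range n, m) :=
        mul_le_mul_of_nonneg_left
          (pow_le_pow_of_le_one hr0 hr1 (sum_range_id_le_two_mul_div_two_mul_succ n))
          (by positivity)
    _ ≤ qFactorial (r ^ 2) n := factorial_mul_pow_le_qFactorial_sq hr0 n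

lemma norm_qExpCoeff_mul_pow_le {q : ℝ} (hq0 : 0 ≤ q) (hq1 : q ≤ 1) (x : ℂ) (n : ℕ) :
    ‖(qExpCoeff q n : ℂ) * x ^ n‖ ≤ ‖x‖ ^ n / n ! := by
  rw [norm_mul, norm_pow, norm_real, Real.norm_of_nonneg (qExpCoeff_nonneg hq0 n),
    div_eq_inv_mul]
  exact mul_le_mul_of_nonneg_right (qExpCoeff_le_inv_factorial hq0 hq1 n) (by positivity)

lemma tendsto_qExpCoeff (n : ℕ) : Tendsto (qExpCoeff · n) (𝓝 1) (𝓝 (n ! : ℝ)⁻¹) := by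
  have hne : qFactorial (1 : ℝ) n ≠ 0 := by rw [qFactorial_one]; positivity
  have hcont : ContinuousAt (qExpCoeff · n) 1 :=
    (continuous_pow _).continuousAt.div (continuous_qFactorial n).continuousAt hne
  simpa [ContinuousAt, qExpCoeff, qFactorial_one] using hcont

lemma neg_I_mul_pow_two_mul (z : ℂ) (k : ℕ) : (-I * z) ^ (2 * k) = (-1) ^ k * z ^ (2 * k) := by
  rw [mul_pow, pow_mul, neg_sq, I_sq]

lemma qCosTerm_neg_half {q : ℝ} (hq : q ≠ 1) (x : ℂ) (k : ℕ) :
    qCosTerm q (-(1 / 2)) (-I * (((1 - q : ℝ) : ℂ) * x)) k = qExpCoeff q (2 * k) * x ^ (2 * k) := by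
  have hq' : (1 - (q : ℂ)) ^ (2 * k) ≠ 0 :=
    pow_ne_zero _ (sub_ne_zero.mpr (by exact_mod_cast hq.symm))
  have hsign : ((-1 : ℂ) ^ k) ^ 2 = 1 := by rw [← pow_mul, pow_mul', neg_one_sq, one_pow]
  rw [qCosTerm, show (2 * -(1 / 2) + 2 : ℝ) = 1 by norm_num, Real.rpow_one, qPoch_mul_qPoch_sq,
    qPoch_self, qExpCoeff, show 2 * k / 2 = k by omega, neg_I_mul_pow_two_mul, mul_pow,
    ← ofReal_qFactorial]
  push_cast
  rw [div_mul_eq_mul_div, ← mul_div_mul_left _ ((qFactorial q (2 * k) : ℝ) : ℂ) hq']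
  congr 1
  linear_combination (q : ℂ) ^ (k * (k + 1)) * (1 - (q : ℂ)) ^ (2 * k) * x ^ (2 * k) * hsign

lemma I_mul_qSinTerm_neg_half {q : ℝ} (hq : q ≠ 1) (x : ℂ) (k : ℕ) :
    I * qSinTerm q (-(1 / 2)) (-I * (((1 - q : ℝ) : ℂ) * x)) k =
      qExpCoeff q (2 * k + 1) * x ^ (2 * k + 1) := by
  have hq' : (1 - (q : ℂ)) ^ (2 * k + 1) ≠ 0 :=
    pow_ne_zero _ (sub_ne_zero.mpr (by exact_mod_cast hq.symm))
  have hsign : ((-1 : ℂ) ^ k) ^ 2 = 1 := by rw [← pow_mul, pow_mul', neg_one_sq, one_pow]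
  rw [qSinTerm, show (2 * -(1 / 2) + 2 : ℝ) = 1 by norm_num, Real.rpow_one,
    qPoch_succ_mul_qPoch_sq, qPoch_self, qExpCoeff, show (2 * k + 1) / 2 = k by omega, pow_succ,
    neg_I_mul_pow_two_mul, mul_pow, ← ofReal_qFactorial]
  push_cast
  rw [mul_div_assoc', div_mul_eq_mul_div,
    ← mul_div_mul_left _ ((qFactorial q (2 * k + 1) : ℝ) : ℂ) hq']
  congr 1
  linear_combination (q : ℂ) ^ (k * (k + 1)) * (1 - (q : ℂ)) ^ (2 * k + 1) * x ^ (2 * k + 1) *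
    (hsign - ((-1 : ℂ) ^ k) ^ 2 * I_sq)

lemma qExp_neg_half_one_sub_mul {q : ℝ} (hq0 : 0 ≤ q) (hq1 : q < 1) (x : ℂ) :
    qExp q (-(1 / 2)) (((1 - q : ℝ) : ℂ) * x) = ∑' n, (qExpCoeff q n : ℂ) * x ^ n := by
  set f : ℕ → ℂ := fun n => qExpCoeff q n * x ^ n
  have hf : Summable f :=
    .of_norm_bounded (Real.summable_pow_div_factorial ‖x‖) (norm_qExpCoeff_mul_pow_le hq0 hq1.le x)
  have hmul : Function.Injective (2 * · : ℕ → ℕ) := mul_right_injective₀ two_ne_zero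
  rw [← tsum_even_add_odd (hf.comp_injective hmul)
    (hf.comp_injective ((add_left_injective 1).comp hmul)), qExp, qCos, qSin, ← tsum_mul_left]
  simp only [f, qCosTerm_neg_half hq1.ne, I_mul_qSinTerm_neg_half hq1.ne]

/-- lim_{q→1⁻} e_{-1/2}((1-q)x;q²) = eˣ. -/
theorem qExp_tendsto_exp (x : ℂ) :
    Filter.Tendsto (fun q : ℝ => qExp q (-(1 / 2)) (((1 - q : ℝ) : ℂ) * x))
      (nhdsWithin 1 (Set.Ioo 0 1)) (nhds (Complex.exp x)) := by
  have hcoeff (n : ℕ) : Tendsto (fun q : ℝ => (qExpCoeff q n : ℂ) * x ^ n)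
      (𝓝[Set.Ioo 0 1] 1) (𝓝 (x ^ n / n !)) := by
    have := ((continuous_ofReal.tendsto _).comp (tendsto_qExpCoeff n)).mul_const (x ^ n)
    simpa [div_eq_inv_mul] using this.mono_left nhdsWithin_le_nhds
  have hbound : ∀ᶠ q in 𝓝[Set.Ioo 0 1] 1, ∀ n, ‖(qExpCoeff q n : ℂ) * x ^ n‖ ≤ ‖x‖ ^ n / n ! :=
    eventually_nhdsWithin_of_forall fun q hq => norm_qExpCoeff_mul_pow_le hq.1.le hq.2.le x
  rw [exp_eq_exp_ℂ, NormedSpace.exp_eq_tsum_div]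
  refine (tendsto_tsum_of_dominated_convergence (Real.summable_pow_div_factorial ‖x‖) hcoeff
    hbound).congr' ?_
  filter_upwards [self_mem_nhdsWithin] with q hq
  exact (qExp_neg_half_one_sub_mul hq.1.le hq.2 x).symm
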